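/- arXiv:1910.06928 — 8 statements merged into one kernel-verified Lean document; each statement's English description precedes it below -/
import Mathlib

section
/- For all α, β, α′, β′ ∈ ℂ and every sequence F : ℕ → ℂ, the generalized binomial transforms satisfy the composition rule B_{α,β} (B_{α′,β′} F) = B_{α + α′β, ββ′} F. -/
/-- The generalized binomial transform. -/
noncomputable def binTransform (α β : ℂ) (F : ℕ → ℂ) : ℕ → ℂ :=
  fun n => ∑ k ∈ Finset.range (n + 1), (n.choose k : ℂ) * α ^ (n - k) * β ^ k * F k

open Finset

/-- Trinomial revision `C(n,k) C(k,j) = C(n,j) C(n-j,k-j)` turns the sum into a binomial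
expansion of `(a + b) ^ (n - j)`. -/
theorem sum_Ico_choose_mul_choose_mul_pow {R : Type*} [CommSemiring R] (a b : R) {j n : ℕ}
    (hjn : j ≤ n) :
    ∑ k ∈ Ico j (n + 1), (n.choose k * k.choose j : R) * a ^ (n - k) * b ^ (k - j) =
      n.choose j * (a + b) ^ (n - j) := by
  rw [sum_Ico_eq_sum_range, show n + 1 - j = n - j + 1 by omega, add_comm a, add_pow, mul_sum]
  refine sum_congr rfl fun m _ => ?_
  rw [← Nat.cast_mul, Nat.choose_mul (Nat.le_add_right j m), Nat.add_sub_cancel_left,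
    Nat.sub_add_eq]
  push_cast
  ring

/-- Composition rule for the generalized binomial transform:
`B_{α,β} (B_{α',β'} F) = B_{α + α' β, β β'} F`. -/
theorem stmt_1 (α β α' β' : ℂ) (F : ℕ → ℂ) :
    binTransform α β (binTransform α' β' F) = binTransform (α + α' * β) (β * β') F := by
  funext n
  simp only [binTransform, mul_sum, range_eq_Ico]
  rw [← sum_Ico_Ico_comm]
  refine sum_congr rfl fun j hj => ?_
  have hjn : j ≤ n := Nat.lt_succ_iff.mp (mem_Ico.mp hj).2
  rw [← sum_Ico_choose_mul_choose_mul_pow α (α' * β) hjn, sum_mul, sum_mul]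
  refine sum_congr rfl fun k hk => ?_
  obtain ⟨i, rfl⟩ := Nat.exists_eq_add_of_le (mem_Ico.mp hk).1
  rw [Nat.add_sub_cancel_left]
  ring
end

section
/- Let α, β ∈ ℂ and let F : ℕ → ℂ. Then B_{α,β}(M F) = M((I − αS)(B_{α,β} F)); concretely, for every n ∈ ℕ, ∑_{k=0}^{n} (n choose k) α^{n−k} β^{k} k F_k = n (B_{α,β}F)_n − α n (B_{α,β}F)_{n−1}, where the term (B_{α,β}F)_{n−1} is taken to be 0 when n = 0. -/
open Finset

theorem Nat.mul_choose_succ_add_succ_mul_choose (m k : ℕ) :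
    k * (m + 1).choose k + (m + 1) * m.choose k = (m + 1) * (m + 1).choose k := by
  cases k with
  | zero => simp
  | succ j => rw [mul_comm (j + 1), ← Nat.add_one_mul_choose_eq, Nat.choose_succ_succ', mul_add]

section CommRing

variable {R : Type*} [CommRing R]

theorem choose_mul_pow_mul_cast_mul_eq (α β x : R) {m k : ℕ} (hk : k ≤ m) :
    ((m + 1).choose k : R) * α ^ (m + 1 - k) * β ^ k * k * x
      = (m + 1) * ((m + 1).choose k * α ^ (m + 1 - k) * β ^ k * x)
        - α * (m + 1) * (m.choose k * α ^ (m - k) * β ^ k * x) := by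
  have hchoose :
      (k : R) * (m + 1).choose k + (m + 1) * m.choose k = (m + 1) * (m + 1).choose k := by
    exact_mod_cast congrArg (Nat.cast (R := R)) (Nat.mul_choose_succ_add_succ_mul_choose m k)
  rw [Nat.sub_add_comm hk, pow_succ]
  linear_combination (α ^ (m - k) * α * β ^ k * x) * hchoose

theorem sum_choose_mul_pow_mul_cast_mul_succ (α β : R) (F : ℕ → R) (m : ℕ) :
    ∑ k ∈ range (m + 2), ((m + 1).choose k : R) * α ^ (m + 1 - k) * β ^ k * k * F k
      = (m + 1) * ∑ k ∈ range (m + 2), ((m + 1).choose k : R) * α ^ (m + 1 - k) * β ^ k * F k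
        - α * (m + 1) * ∑ k ∈ range (m + 1), (m.choose k : R) * α ^ (m - k) * β ^ k * F k := by
  rw [sum_range_succ, sum_range_succ _ (m + 1), mul_add, mul_sum, mul_sum, add_sub_right_comm,
    ← sum_sub_distrib]
  congr 1
  · exact sum_congr rfl fun k hk ↦
      choose_mul_pow_mul_cast_mul_eq α β (F k) (Nat.lt_succ_iff.mp (mem_range.mp hk))
  · simp only [Nat.choose_self, tsub_self, pow_zero, Nat.cast_one, one_mul, mul_one, Nat.cast_add]
    ring

end CommRing

/-- `B_{α,β}(M F) = M ((I - α S) (B_{α,β} F))`, i.e.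
`∑_{k=0}^n C(n,k) α^{n-k} β^k k F_k = n (B F)_n - α n (B F)_{n-1}`,
where `(B F)_{n-1}` is taken to be `0` when `n = 0`. -/
theorem stmt_6 (α β : ℂ) (F : ℕ → ℂ) (n : ℕ) :
    ∑ k ∈ Finset.range (n + 1), (n.choose k : ℂ) * α ^ (n - k) * β ^ k * (k : ℂ) * F k
      = (n : ℂ) * binTransform α β F n
        - α * (n : ℂ) * (if n = 0 then 0 else binTransform α β F (n - 1)) := by
  cases n with
  | zero => simp
  | succ m =>
    simpa [binTransform] using sum_choose_mul_pow_mul_cast_mul_succ α β F m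
end

section
/- Let α, β ∈ ℂ, let p be a positive integer, and let F : ℕ → ℂ. Then β^p · B_{α,β}((S*)^p F) = (S* − αI)^p (B_{α,β} F), where (S*)^p F is the sequence n ↦ F_{n+p} and (S* − αI)^p denotes the p-fold composition of the operator G ↦ (n ↦ G_{n+1} − α G_n). -/
theorem binTransform_succ (α β : ℂ) (F : ℕ → ℂ) (n : ℕ) :
    binTransform α β F (n + 1)
      = α * binTransform α β F n + β * binTransform α β (fun m => F (m + 1)) n := by
  have hpascal := Finset.sum_choose_succ_mul (fun i j => α ^ j * β ^ i * F i) n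
  simp only [binTransform, Finset.mul_sum]
  convert hpascal using 1
  · exact Finset.sum_congr rfl fun k _ => by ring
  · congr 1
    · refine Finset.sum_congr rfl fun k hk => ?_
      rw [Nat.sub_add_comm (Finset.mem_range_succ_iff.mp hk), pow_succ]
      ring
    · exact Finset.sum_congr rfl fun k _ => by ring

theorem binTransform_shift_sub_smul (α β : ℂ) (F : ℕ → ℂ) :
    (fun n => binTransform α β F (n + 1) - α * binTransform α β F n)
      = β • binTransform α β (fun m => F (m + 1)) := by
  funext n
  rw [binTransform_succ, Pi.smul_apply, smul_eq_mul]
  ring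

theorem iterate_shift_sub_smul_smul (α c : ℂ) (p : ℕ) (G : ℕ → ℂ) :
    (fun G : ℕ → ℂ => fun n => G (n + 1) - α * G n)^[p] (c • G)
      = c • (fun G : ℕ → ℂ => fun n => G (n + 1) - α * G n)^[p] G := by
  have hcomm : Function.Commute (fun G : ℕ → ℂ => fun n => G (n + 1) - α * G n) (c • ·) :=
    fun G => funext fun n => by simp only [Pi.smul_apply, smul_eq_mul]; ring
  exact (hcomm.iterate_left p) G

theorem stmt_8_general (α β : ℂ) (p : ℕ) (F : ℕ → ℂ) :
    (fun n => β ^ p * binTransform α β (fun m => F (m + p)) n)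
      = (fun G : ℕ → ℂ => fun n => G (n + 1) - α * G n)^[p] (binTransform α β F) := by
  induction p generalizing F with
  | zero => simp
  | succ p ih =>
    rw [Function.iterate_succ_apply, binTransform_shift_sub_smul, iterate_shift_sub_smul_smul,
      ← ih]
    funext n
    simp only [Pi.smul_apply, smul_eq_mul, add_assoc, pow_succ]
    ring

/-- `β^p B_{α,β}((S*)^p F) = (S* - α I)^p (B_{α,β} F)` for every positive integer `p`,
where `(S*)^p F = (n ↦ F (n+p))` and `(S* - α I)` is the operator
`G ↦ (n ↦ G (n+1) - α G n)`. -/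
theorem stmt_8 (α β : ℂ) (p : ℕ) (hp : 0 < p) (F : ℕ → ℂ) :
    (fun n => β ^ p * binTransform α β (fun m => F (m + p)) n)
      = (fun G : ℕ → ℂ => fun n => G (n + 1) - α * G n)^[p] (binTransform α β F) :=
  stmt_8_general α β p F
end

section
/- (Generalized Euler transform identity.) Let α, β ∈ ℂ with β ≠ 0, α + β ≠ 0, and |α| < |α + β|, and let F : ℕ → ℂ be a summable sequence. Assume that the double family (n, k) ↦ (n choose k) α^{n−k} β^{k+1} F_k / (α+β)^{n+1}, indexed over pairs (n,k) ∈ ℕ × ℕ with k ≤ n, is absolutely summable. Then the sequence n ↦ β (B_{α,β} F)_n / (α+β)^{n+1} is summable and ∑_{k=0}^{∞} F_k = ∑_{n=0}^{∞} β (B_{α,β} F)_n / (α+β)^{n+1}. -/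
/-!
Put `r = α / (α + β)`, so that `‖r‖ < 1` and `1 - r = β / (α + β)`. Summing the double family
`C(n,k) α^{n-k} β^{k+1} F_k / (α+β)^{n+1}` over `n` for fixed `k` gives, by the negative binomial
series `∑_m C(m+k,k) r^m = (1-r)^{-(k+1)}`, exactly `F_k`; summing it over `k` for fixed `n` is a
finite sum (`C(n,k) = 0` for `k > n`) equal to `β (B_{α,β} F)_n / (α+β)^{n+1}`. Absolute
summability lets the two iterated sums be compared.
-/

open Finset

lemma hasSum_choose_mul_pow_div_pow {𝕜 : Type*} [NormedField 𝕜] [CompleteSpace 𝕜] {a b : 𝕜}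
    (hb : b ≠ 0) (hab : ‖a‖ < ‖a + b‖) (k : ℕ) :
    HasSum (fun n => (n.choose k : 𝕜) * a ^ (n - k) * b ^ (k + 1) / (a + b) ^ (n + 1)) 1 := by
  have hab0 : a + b ≠ 0 := norm_pos_iff.mp ((norm_nonneg a).trans_lt hab)
  have hr : ‖a / (a + b)‖ < 1 := by rwa [norm_div, div_lt_one ((norm_nonneg a).trans_lt hab)]
  have hsub : 1 - a / (a + b) = b / (a + b) := by field_simp; ring
  have hshift := (hasSum_choose_mul_geometric_of_norm_lt_one k hr).mul_right
    ((b / (a + b)) ^ (k + 1))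
  rw [hsub, one_div_mul_cancel (pow_ne_zero _ (div_ne_zero hb hab0))] at hshift
  rw [← hasSum_nat_add_iff' k, sum_eq_zero fun i hi => by
    rw [Nat.choose_eq_zero_of_lt (mem_range.mp hi), Nat.cast_zero, zero_mul, zero_mul, zero_div],
    sub_zero]
  refine hshift.congr_fun fun m => ?_
  rw [Nat.add_sub_cancel, div_pow, div_pow]
  field_simp
  ring

noncomputable def eulerTerm (α β : ℂ) (F : ℕ → ℂ) (n k : ℕ) : ℂ :=
  (n.choose k : ℂ) * α ^ (n - k) * β ^ (k + 1) * F k / (α + β) ^ (n + 1)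

lemma summable_eulerTerm {α β : ℂ} {F : ℕ → ℂ}
    (h : Summable (fun p : {q : ℕ × ℕ // q.2 ≤ q.1} => ‖eulerTerm α β F p.1.1 p.1.2‖)) :
    Summable (fun p : ℕ × ℕ => eulerTerm α β F p.1 p.2) := by
  have hsupp : Function.support (fun p : ℕ × ℕ => eulerTerm α β F p.1 p.2) ⊆
      {q | q.2 ≤ q.1} := fun p hp =>
    show p.2 ≤ p.1 from not_lt.mp fun hlt =>
      hp (by simp [eulerTerm, Nat.choose_eq_zero_of_lt hlt])
  rw [← Set.indicator_eq_self.mpr hsupp, ← summable_subtype_iff_indicator]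
  exact h.of_norm

lemma hasSum_eulerTerm_row (α β : ℂ) (F : ℕ → ℂ) (n : ℕ) :
    HasSum (eulerTerm α β F n) (β * binTransform α β F n / (α + β) ^ (n + 1)) := by
  have hrow : ∑ k ∈ range (n + 1), eulerTerm α β F n k =
      β * binTransform α β F n / (α + β) ^ (n + 1) := by
    rw [binTransform, mul_sum, sum_div]
    exact sum_congr rfl fun k _ => by rw [eulerTerm]; ring
  rw [← hrow]
  refine hasSum_sum_of_ne_finset_zero fun k hk => ?_
  rw [eulerTerm, Nat.choose_eq_zero_of_lt (by simpa using hk)]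
  simp

lemma hasSum_eulerTerm_col {α β : ℂ} (hβ : β ≠ 0) (habs : ‖α‖ < ‖α + β‖) (F : ℕ → ℂ) (k : ℕ) :
    HasSum (fun n => eulerTerm α β F n k) (F k) := by
  simpa [eulerTerm, mul_right_comm _ (F k), mul_div_right_comm _ (F k)] using
    (hasSum_choose_mul_pow_div_pow hβ habs k).mul_right (F k)

theorem stmt_10_general (α β : ℂ) (hβ : β ≠ 0)
    (habs : ‖α‖ < ‖α + β‖)
    (F : ℕ → ℂ)
    (hdouble : Summable (fun p : {q : ℕ × ℕ // q.2 ≤ q.1} =>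
      ‖(p.1.1.choose p.1.2 : ℂ) * α ^ (p.1.1 - p.1.2) * β ^ (p.1.2 + 1) * F p.1.2 /
        (α + β) ^ (p.1.1 + 1)‖)) :
    Summable (fun n => β * binTransform α β F n / (α + β) ^ (n + 1)) ∧
      ∑' k, F k = ∑' n, β * binTransform α β F n / (α + β) ^ (n + 1) := by
  have hsum := (summable_eulerTerm hdouble).hasSum
  have hrows := hsum.prod_fiberwise (hasSum_eulerTerm_row α β F)
  have hcols := ((Equiv.prodComm ℕ ℕ).hasSum_iff.mpr hsum).prod_fiberwise
    (hasSum_eulerTerm_col hβ habs F)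
  exact ⟨hrows.summable, hcols.tsum_eq.trans hrows.tsum_eq.symm⟩

/-- Generalized Euler transform identity: if `F` is summable and the double family
`(n,k) ↦ C(n,k) α^{n-k} β^{k+1} F_k / (α+β)^{n+1}` (over pairs with `k ≤ n`) is absolutely
summable, then `∑ F_k = ∑ β (B_{α,β} F)_n / (α+β)^{n+1}`. -/
theorem stmt_10 (α β : ℂ) (hβ : β ≠ 0) (hαβ : α + β ≠ 0)
    (habs : ‖α‖ < ‖α + β‖)
    (F : ℕ → ℂ) (hF : Summable F)
    (hdouble : Summable (fun p : {q : ℕ × ℕ // q.2 ≤ q.1} =>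
      ‖(p.1.1.choose p.1.2 : ℂ) * α ^ (p.1.1 - p.1.2) * β ^ (p.1.2 + 1) * F p.1.2 /
        (α + β) ^ (p.1.1 + 1)‖)) :
    Summable (fun n => β * binTransform α β F n / (α + β) ^ (n + 1)) ∧
      ∑' k, F k = ∑' n, β * binTransform α β F n / (α + β) ^ (n + 1) :=
  stmt_10_general α β hβ habs F hdouble
end

section
/- (One step of extrapolation accelerates linearly convergent sequences.) Let g ∈ ℂ with 0 < |g| < 1 and g ≠ 1, let μ ∈ ℝ, and let c, L ∈ ℂ. Suppose F : ℕ → ℂ satisfies: there is a constant C ≥ 0 such that |F_k − L − c g^k / k^μ| ≤ C |g|^k / k^{μ+1} for all k ≥ 1. Set α = 1/(1−g) and β = g/(g−1), and define G : ℕ → ℂ by G = α F + β (S F), i.e., G_0 = α F_0 and G_k = α F_k + β F_{k−1} for k ≥ 1. Then there is a constant C′ ≥ 0 such that |G_k − L| ≤ C′ |g|^k / k^{μ+1} for all k ≥ 1. -/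
/-!
Since `α + β = 1` and `β g^(k-1) = -α g^k`, the leading terms `c g^k / k^μ` almost cancel in
`G_k - L`: what remains is `α` and `β` times the errors at `k` and `k - 1`, which are
`O(|g|^k / k^(μ+1))` because `k^(μ+1)` and `(k-1)^(μ+1)` are comparable, plus
`α c g^k (1/k^μ - 1/(k-1)^μ)`, which is `O(|g|^k / k^(μ+1))` by the mean value theorem.
The rate does not vanish for `k ≥ 1`, so the asymptotic bound is a uniform one.
-/

open Asymptotics Filter Real

lemma rpow_le_two_rpow_abs_mul_rpow (s : ℝ) {x y : ℝ} (hx : 0 < x) (hy : 0 < y)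
    (hxy : x ≤ 2 * y) (hyx : y ≤ 2 * x) : x ^ s ≤ 2 ^ |s| * y ^ s := by
  rcases le_total 0 s with hs | hs
  · calc x ^ s ≤ (2 * y) ^ s := rpow_le_rpow hx.le hxy hs
      _ = 2 ^ |s| * y ^ s := by rw [abs_of_nonneg hs, mul_rpow zero_le_two hy.le]
  · calc x ^ s ≤ (y / 2) ^ s := rpow_le_rpow_of_nonpos (by positivity) (by linarith) hs
      _ = 2 ^ |s| * y ^ s := by
        rw [abs_of_nonpos hs, div_rpow hy.le zero_le_two, rpow_neg zero_le_two]; ring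

lemma abs_one_div_rpow_succ_sub_one_div_rpow_le (μ : ℝ) {x : ℝ} (hx : 1 ≤ x) :
    |1 / (x + 1) ^ μ - 1 / x ^ μ| ≤ |μ| * 2 ^ |μ + 1| / (x + 1) ^ (μ + 1) := by
  have hx0 : 0 < x := by linarith
  obtain ⟨ξ, ⟨hxξ, hξx⟩, hslope⟩ := exists_hasDerivAt_eq_slope (fun t => t ^ (-μ))
    (fun t => -μ * t ^ (-μ - 1)) (lt_add_one x)
    (fun t ht => (continuousAt_rpow_const t (-μ) (Or.inl (by linarith [ht.1]))).continuousWithinAt)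
    (fun t ht => by simpa using hasDerivAt_rpow_const (p := -μ) (Or.inl (by linarith [ht.1])))
  have hξ0 : 0 < ξ := by linarith
  have hdiff : 1 / (x + 1) ^ μ - 1 / x ^ μ = -μ * ξ ^ (-μ - 1) := by
    rw [hslope, add_sub_cancel_left, div_one, rpow_neg (by linarith), rpow_neg hx0.le]
    simp only [one_div]
  have hcmp : ξ ^ (-(μ + 1)) ≤ 2 ^ |μ + 1| * (x + 1) ^ (-(μ + 1)) := by
    simpa only [abs_neg] using
      rpow_le_two_rpow_abs_mul_rpow (-(μ + 1)) hξ0 (by linarith) (by linarith) (by linarith)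
  rw [hdiff, abs_mul, abs_neg, abs_of_pos (rpow_pos_of_pos hξ0 _), mul_div_assoc,
    show -μ - 1 = -(μ + 1) by ring]
  rw [rpow_neg (by linarith : (0:ℝ) ≤ x + 1), ← div_eq_mul_inv] at hcmp
  exact mul_le_mul_of_nonneg_left hcmp (abs_nonneg μ)

lemma isBigO_pow_div_rpow_succ {a : ℝ} (ha : 0 < a) (s : ℝ) :
    (fun n : ℕ => a ^ n / (n : ℝ) ^ s) =O[atTop]
      fun n : ℕ => a ^ (n + 1) / ((n : ℝ) + 1) ^ s := by
  refine IsBigO.of_bound (2 ^ |s| / a) ((eventually_ge_atTop 1).mono fun n hn => ?_)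
  have hn0 : (0 : ℝ) < n := by exact_mod_cast hn
  have hn1 : (1 : ℝ) ≤ n := by exact_mod_cast hn
  have hcmp : ((n : ℝ) + 1) ^ s ≤ 2 ^ |s| * (n : ℝ) ^ s :=
    rpow_le_two_rpow_abs_mul_rpow s (by positivity) hn0 (by linarith) (by linarith)
  rw [norm_of_nonneg (by positivity), norm_of_nonneg (by positivity), pow_succ,
    div_le_iff₀ (by positivity)]
  calc a ^ n = a ^ n / ((n : ℝ) + 1) ^ s * ((n : ℝ) + 1) ^ s := by field_simp
    _ ≤ a ^ n / ((n : ℝ) + 1) ^ s * (2 ^ |s| * (n : ℝ) ^ s) := by gcongr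
    _ = 2 ^ |s| / a * (a ^ n * a / ((n : ℝ) + 1) ^ s) * (n : ℝ) ^ s := by field_simp

lemma isBigO_one_div_rpow_succ_sub_one_div_rpow (μ : ℝ) :
    (fun n : ℕ => 1 / ((n : ℝ) + 1) ^ μ - 1 / (n : ℝ) ^ μ) =O[atTop]
      fun n : ℕ => 1 / ((n : ℝ) + 1) ^ (μ + 1) := by
  refine IsBigO.of_bound (|μ| * 2 ^ |μ + 1|) ((eventually_ge_atTop 1).mono fun n hn => ?_)
  rw [norm_eq_abs, norm_of_nonneg (by positivity), ← mul_div_assoc, mul_one]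
  exact abs_one_div_rpow_succ_sub_one_div_rpow_le μ (by exact_mod_cast hn)

lemma extrapolation_sub_eq {g : ℂ} (hg : g ≠ 1) (L c a b x y : ℂ) (k : ℕ) :
    1 / (1 - g) * a + g / (g - 1) * b - L
      = 1 / (1 - g) * (a - L - c * g ^ (k + 1) / x) + g / (g - 1) * (b - L - c * g ^ k / y)
        + 1 / (1 - g) * c * g ^ (k + 1) * (1 / x - 1 / y) := by
  have h1 : 1 - g ≠ 0 := sub_ne_zero.mpr hg.symm
  have h2 : g - 1 ≠ 0 := sub_ne_zero.mpr hg
  field_simp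
  ring

theorem stmt_11_general (g : ℂ) (hg0 : 0 < ‖g‖) (hgne : g ≠ 1)
    (μ : ℝ) (c L : ℂ) (F : ℕ → ℂ) (C : ℝ)
    (hF : ∀ k : ℕ, 1 ≤ k →
      ‖F k - L - c * g ^ k / ((((k : ℝ) ^ μ : ℝ)) : ℂ)‖ ≤ C * (‖g‖) ^ k / (k : ℝ) ^ (μ + 1))
    (α β : ℂ) (hα : α = 1 / (1 - g)) (hβ : β = g / (g - 1))
    (G : ℕ → ℂ) (hG : G = fun k => α * F k + β * (if k = 0 then 0 else F (k - 1))) :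
    ∃ C' : ℝ, 0 ≤ C' ∧ ∀ k : ℕ, 1 ≤ k →
      ‖G k - L‖ ≤ C' * (‖g‖) ^ k / (k : ℝ) ^ (μ + 1) := by
  subst hα hβ
  set e : ℕ → ℂ := fun k => F k - L - c * g ^ k / (((k : ℝ) ^ μ : ℝ) : ℂ)
  set v : ℕ → ℝ := fun n => ‖g‖ ^ (n + 1) / ((n : ℝ) + 1) ^ (μ + 1)
  have he : e =O[atTop] fun n : ℕ => ‖g‖ ^ n / (n : ℝ) ^ (μ + 1) :=
    .of_bound C ((eventually_ge_atTop 1).mono fun k hk => by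
      simpa [e, norm_of_nonneg (by positivity : 0 ≤ ‖g‖ ^ k / (k : ℝ) ^ (μ + 1)), mul_div_assoc]
        using hF k hk)
  have he_succ : (fun n => e (n + 1)) =O[atTop] v := by
    simpa [v, Function.comp_def] using he.comp_tendsto (tendsto_add_atTop_nat 1)
  have hD : (fun n : ℕ => 1 / (1 - g) * c * g ^ (n + 1) *
      (1 / ((((n + 1 : ℕ) : ℝ) ^ μ : ℝ) : ℂ) - 1 / (((n : ℝ) ^ μ : ℝ) : ℂ))) =O[atTop] v := by
    have hpow := ((isBigO_refl (fun n : ℕ => g ^ (n + 1)) atTop).norm_right).const_mul_left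
      (1 / (1 - g) * c)
    refine (hpow.mul (Complex.isBigO_ofReal_left.mpr
      (isBigO_one_div_rpow_succ_sub_one_div_rpow μ))).congr (fun n => ?_) (fun n => ?_)
    · push_cast; rfl
    · simp only [v, norm_pow, mul_one_div]
  have key : (fun n => G (n + 1) - L) =O[atTop] v := by
    refine (((he_succ.const_mul_left (1 / (1 - g))).add ((he.trans
      (isBigO_pow_div_rpow_succ hg0 _)).const_mul_left (g / (g - 1)))).add hD).congr
      (fun n => ?_) (fun _ => rfl)
    simp only [hG, e, Nat.add_eq_zero_iff, one_ne_zero, and_false, if_false, Nat.add_sub_cancel]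
    exact (extrapolation_sub_eq hgne L c _ _ _ _ n).symm
  obtain ⟨C', hC'0, hC'⟩ := bound_of_isBigO_nat_atTop key
  refine ⟨C', hC'0.le, fun k hk => ?_⟩
  obtain ⟨n, rfl⟩ := Nat.exists_eq_add_of_le' hk
  have hv : 0 < v n := by positivity
  simpa [v, norm_of_nonneg hv.le, mul_div_assoc] using hC' hv.ne'

/-- One step of extrapolation accelerates linearly convergent sequences: if
`F_k = L + c g^k / k^μ + O(|g|^k / k^{μ+1})` and `α = 1/(1-g)`, `β = g/(g-1)`, then
`G = α F + β S F` satisfies `G_k - L ∈ O(|g|^k / k^{μ+1})`. -/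
theorem stmt_11 (g : ℂ) (hg0 : 0 < ‖g‖) (hg1 : ‖g‖ < 1) (hgne : g ≠ 1)
    (μ : ℝ) (c L : ℂ) (F : ℕ → ℂ) (C : ℝ) (hC : 0 ≤ C)
    (hF : ∀ k : ℕ, 1 ≤ k →
      ‖F k - L - c * g ^ k / ((((k : ℝ) ^ μ : ℝ)) : ℂ)‖ ≤ C * (‖g‖) ^ k / (k : ℝ) ^ (μ + 1))
    (α β : ℂ) (hα : α = 1 / (1 - g)) (hβ : β = g / (g - 1))
    (G : ℕ → ℂ) (hG : G = fun k => α * F k + β * (if k = 0 then 0 else F (k - 1))) :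
    ∃ C' : ℝ, 0 ≤ C' ∧ ∀ k : ℕ, 1 ≤ k →
      ‖G k - L‖ ≤ C' * (‖g‖) ^ k / (k : ℝ) ^ (μ + 1) :=
  stmt_11_general g hg0 hgne μ c L F C hF α β hα hβ G hG
end

section
/- Let x ∈ ℂ with x ≠ 2, set α = −x/2, and define W : ℕ → ℂ by W_n = (∑_{k=0}^{n} (n choose k) α^{n−k} x^{k+1}/(k+1)²) / (1 + α)^{n+1}. Then W_0 = x/(1 − x/2), W_1 = −x²/(4(1 − x/2)²), W_2 = x³/(9(1 − x/2)³), and for every n ∈ ℕ, (x−2)³ (n+4)² W_{n+3} = −x³ (n+1)(n+2) W_n + x² (x−2) (n+2)² W_{n+1} + x (x−2)² (n+3)(n+4) W_{n+2}. -/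
/-!
Since `x = -2α`, every term `α^(n-k) x^(k+1)` equals `α^(n+1) (-2)^(k+1)`, so
`W n = r^(n+1) T n` with `r = α/(1+α) = x/(x-2)` and `T n = ∑ₖ C(n,k) (-2)^(k+1)/(k+1)²`.
Absorbing a factor `k+1` into the binomial coefficient and applying Pascal's rule gives
`(n+2) ((n+2) T(n+1) - (n+1) T n) = (1+y)^(n+2) - 1` for the analogous sums at any `y`.
At `y = -2` the right-hand side `(-1)^n - 1` is 2-periodic, so two instances of this identity
yield a third-order recurrence for `T`, which becomes the one for `W` because `r (x-2) = x`.
-/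

open Finset

section

variable {K : Type*} [Field K]

/-- `(B_{1,1} Q)_n` for the dilogarithm summands `Q_k = y^(k+1)/(k+1)²`. -/
def dilogBinomialSum (y : K) (n : ℕ) : K :=
  ∑ k ∈ range (n + 1), (n.choose k : K) * y ^ (k + 1) / ((k : K) + 1) ^ 2

theorem sum_choose_mul_pow_mul_pow_div_sq (a t x : K) (hx : x = t * a) (n : ℕ) :
    ∑ k ∈ range (n + 1), (n.choose k : K) * a ^ (n - k) * x ^ (k + 1) / ((k : K) + 1) ^ 2 =
      a ^ (n + 1) * dilogBinomialSum t n := by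
  subst hx
  rw [dilogBinomialSum, mul_sum]
  refine sum_congr rfl fun k hk => ?_
  have hsplit : a ^ (n + 1) = a ^ (n - k) * a ^ (k + 1) := by
    rw [← pow_add]
    have := mem_range.mp hk
    congr 1
    omega
  rw [hsplit, mul_pow]
  ring

theorem succ_mul_choose_div_succ [CharZero K] (n k : ℕ) :
    ((n : K) + 1) * (n.choose k : K) / ((k : K) + 1) = ((n + 1).choose (k + 1) : K) := by
  rw [div_eq_iff (Nat.cast_add_one_ne_zero k)]
  exact_mod_cast Nat.add_one_mul_choose_eq n k

theorem succ_mul_sum_choose_mul_pow_div_succ [CharZero K] (y : K) (n : ℕ) :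
    ((n : K) + 1) * ∑ k ∈ range (n + 1), (n.choose k : K) * y ^ (k + 1) / ((k : K) + 1) =
      (1 + y) ^ (n + 1) - 1 := by
  rw [add_comm 1 y, add_pow, sum_range_succ' _ (n + 1), mul_sum]
  simp only [one_pow, mul_one, Nat.choose_zero_right, pow_zero, Nat.cast_one, add_sub_cancel_right]
  refine sum_congr rfl fun k _ => ?_
  rw [← succ_mul_choose_div_succ]
  ring

theorem succ_mul_dilogBinomialSum [CharZero K] (y : K) (n : ℕ) :
    ((n : K) + 1) * dilogBinomialSum y n =
      ∑ k ∈ range (n + 1), ((n + 1).choose (k + 1) : K) * y ^ (k + 1) / ((k : K) + 1) := by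
  rw [dilogBinomialSum, mul_sum]
  refine sum_congr rfl fun k _ => ?_
  rw [← succ_mul_choose_div_succ, sq, ← div_div]
  ring

theorem dilogBinomialSum_succ_sub [CharZero K] (y : K) (n : ℕ) :
    ((n : K) + 2) * dilogBinomialSum y (n + 1) - ((n : K) + 1) * dilogBinomialSum y n =
      ∑ k ∈ range (n + 2), ((n + 1).choose k : K) * y ^ (k + 1) / ((k : K) + 1) := by
  have hnext := succ_mul_dilogBinomialSum y (n + 1)
  push_cast at hnext
  have hext : ∑ k ∈ range (n + 1), ((n + 1).choose (k + 1) : K) * y ^ (k + 1) / ((k : K) + 1) =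
      ∑ k ∈ range (n + 2), ((n + 1).choose (k + 1) : K) * y ^ (k + 1) / ((k : K) + 1) := by
    rw [sum_range_succ _ (n + 1), Nat.choose_succ_self]
    simp
  rw [show (n : K) + 2 = n + 1 + 1 by ring, hnext, succ_mul_dilogBinomialSum, hext,
    ← sum_sub_distrib]
  refine sum_congr rfl fun k _ => ?_
  rw [Nat.choose_succ_succ' (n + 1) k]
  push_cast
  ring

theorem dilogBinomialSum_step [CharZero K] (y : K) (n : ℕ) :
    ((n : K) + 2) * (((n : K) + 2) * dilogBinomialSum y (n + 1) -
      ((n : K) + 1) * dilogBinomialSum y n) = (1 + y) ^ (n + 2) - 1 := by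
  have h := succ_mul_sum_choose_mul_pow_div_succ y (n + 1)
  push_cast at h
  rw [dilogBinomialSum_succ_sub]
  linear_combination h

theorem dilogBinomialSum_neg_two_rec [CharZero K] (n : ℕ) :
    ((n : K) + 4) ^ 2 * dilogBinomialSum (-2) (n + 3) =
      -((n : K) + 1) * ((n : K) + 2) * dilogBinomialSum (-2) n
        + ((n : K) + 2) ^ 2 * dilogBinomialSum (-2) (n + 1)
        + ((n : K) + 3) * ((n : K) + 4) * dilogBinomialSum (-2) (n + 2) := by
  have h₀ := dilogBinomialSum_step (-2 : K) n
  have h₂ := dilogBinomialSum_step (-2 : K) (n + 2)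
  have hperiodic : (1 + -2 : K) ^ (n + 2 + 2) = (1 + -2) ^ (n + 2) := by
    rw [pow_add]
    norm_num
  push_cast at h₂
  linear_combination h₂ - h₀ - hperiodic

theorem pow_mul_dilogBinomialSum_neg_two_rec [CharZero K] {x r : K} (hr : r * (x - 2) = x)
    (n : ℕ) :
    (x - 2) ^ 3 * ((n : K) + 4) ^ 2 * (r ^ (n + 4) * dilogBinomialSum (-2) (n + 3)) =
      -x ^ 3 * ((n : K) + 1) * ((n : K) + 2) * (r ^ (n + 1) * dilogBinomialSum (-2) n)
        + x ^ 2 * (x - 2) * ((n : K) + 2) ^ 2 * (r ^ (n + 2) * dilogBinomialSum (-2) (n + 1))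
        + x * (x - 2) ^ 2 * ((n : K) + 3) * ((n : K) + 4)
          * (r ^ (n + 3) * dilogBinomialSum (-2) (n + 2)) := by
  have hpow : ∀ i, x ^ i * r ^ (n + 1) = (x - 2) ^ i * r ^ (n + 1 + i) := fun i =>
    calc x ^ i * r ^ (n + 1) = (r * (x - 2)) ^ i * r ^ (n + 1) := by rw [hr]
      _ = (x - 2) ^ i * r ^ (n + 1 + i) := by rw [mul_pow, pow_add]; ring
  linear_combination x ^ 3 * r ^ (n + 1) * dilogBinomialSum_neg_two_rec (K := K) n
    - ((n : K) + 4) ^ 2 * dilogBinomialSum (-2) (n + 3) * hpow 3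
    + x ^ 2 * ((n : K) + 2) ^ 2 * dilogBinomialSum (-2) (n + 1) * hpow 1
    + x * ((n : K) + 3) * ((n : K) + 4) * dilogBinomialSum (-2) (n + 2) * hpow 2

end

/-- Initial values and third-order recurrence for the summand
`W_n = (B_{-x/2,1} Q)_n / (1 - x/2)^{n+1}` of the transformed dilogarithm series. -/
theorem stmt_15 (x : ℂ) (hx : x ≠ 2) (α : ℂ) (hα : α = -x / 2) (W : ℕ → ℂ)
    (hW : W = fun (n : ℕ) =>
      (∑ k ∈ Finset.range (n + 1),
        (n.choose k : ℂ) * α ^ (n - k) * x ^ (k + 1) / ((k : ℂ) + 1) ^ 2) / (1 + α) ^ (n + 1)) :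
    W 0 = x / (1 - x / 2) ∧
    W 1 = -x ^ 2 / (4 * (1 - x / 2) ^ 2) ∧
    W 2 = x ^ 3 / (9 * (1 - x / 2) ^ 3) ∧
    ∀ n : ℕ, (x - 2) ^ 3 * ((n : ℂ) + 4) ^ 2 * W (n + 3)
      = -x ^ 3 * ((n : ℂ) + 1) * ((n : ℂ) + 2) * W n
        + x ^ 2 * (x - 2) * ((n : ℂ) + 2) ^ 2 * W (n + 1)
        + x * (x - 2) ^ 2 * ((n : ℂ) + 3) * ((n : ℂ) + 4) * W (n + 2) := by
  have hx₂ : x - 2 ≠ 0 := sub_ne_zero.mpr hx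
  have hα₁ : 1 + α ≠ 0 := fun h => hx₂ (by linear_combination -2 * h + 2 * hα)
  obtain ⟨r, hr_def⟩ : ∃ r, r = x / (x - 2) := ⟨_, rfl⟩
  have hratio : α / (1 + α) = r := by
    rw [hr_def, div_eq_div_iff hα₁ hx₂, hα]
    ring
  have hWr : ∀ n, W n = r ^ (n + 1) * dilogBinomialSum (-2) n := fun n => by
    simp only [hW]
    rw [sum_choose_mul_pow_mul_pow_div_sq α (-2) x (by rw [hα]; ring),
      mul_div_right_comm, ← div_pow, hratio]
  have hr : r * (x - 2) = x := by rw [hr_def, div_mul_cancel₀ x hx₂]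
  have hx₂' : 2 - x ≠ 0 := sub_ne_zero.mpr hx.symm
  have hT₀ : dilogBinomialSum (-2 : ℂ) 0 = -2 := by norm_num [dilogBinomialSum]
  have hT₁ : dilogBinomialSum (-2 : ℂ) 1 = -1 := by norm_num [dilogBinomialSum, sum_range_succ]
  have hT₂ : dilogBinomialSum (-2 : ℂ) 2 = -8 / 9 := by
    norm_num [dilogBinomialSum, sum_range_succ]
  refine ⟨?_, ?_, ?_, fun n => ?_⟩
  rotate_right
  · simp only [hWr]
    linear_combination pow_mul_dilogBinomialSum_neg_two_rec hr n
  all_goals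
    simp only [hWr, hT₀, hT₁, hT₂, hr_def, Nat.reduceAdd]
    field_simp
    ring
end

section
/- For every x ∈ ℂ that does not lie on the real interval [1, ∞) (i.e., it is not the case that Im(x) = 0 and Re(x) ≥ 1), there exists α ∈ ℂ with α ≠ −1, α ≠ −x, and α ≠ 0 such that max(|α/(α+1)|, |(α+x)/(α+1)|) < 1. -/
/-!
Both inequalities say that `α` lies in an open half-plane: `‖α‖ < ‖α + 1‖` means
`2 ⟪α, 1⟫ > -1`, and `‖α + x‖ < ‖α + 1‖` means `2 ⟪α, 1 - x⟫ > ‖x‖² - 1`. Along a ray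
`t • w` both hold for large `t` as soon as `⟪w, 1⟫ > 0` and `⟪w, 1 - x⟫ > 0`. With `v = 1 - x`, the
direction `w = ‖v‖ + v` bisects `1` and `v` and has `⟪w, 1⟫ = ‖v‖ + re v` and
`⟪w, v⟫ = ‖v‖ (‖v‖ + re v)`, both positive exactly when `v` is off the ray `(-∞, 0]`, i.e. when
`x ∉ [1, ∞)`. Large `t` also keeps `t • w` away from `0` and `-x`.
-/

open Filter ComplexConjugate
open scoped InnerProductSpace

theorem eventually_norm_smul_add_lt {E : Type*} [NormedAddCommGroup E] [InnerProductSpace ℝ E]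
    {w a b : E} (h : 0 < ⟪w, b - a⟫_ℝ) :
    ∀ᶠ t : ℝ in atTop, ‖t • w + a‖ < ‖t • w + b‖ := by
  filter_upwards [eventually_gt_atTop ((‖a‖ ^ 2 - ‖b‖ ^ 2) / (2 * ⟪w, b - a⟫_ℝ))] with t ht
  rw [div_lt_iff₀ (by positivity)] at ht
  refine (sq_lt_sq₀ (norm_nonneg _) (norm_nonneg _)).1 ?_
  rw [norm_add_sq_real, norm_add_sq_real, real_inner_smul_left, real_inner_smul_left]
  rw [inner_sub_right] at h ht
  nlinarith

theorem eventually_smul_ne {E : Type*} [NormedAddCommGroup E] [NormedSpace ℝ E]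
    {w : E} (hw : w ≠ 0) (c : E) : ∀ᶠ t : ℝ in atTop, t • w ≠ c := by
  filter_upwards [eventually_gt_atTop (‖c‖ / ‖w‖)] with t ht
  have ht0 : 0 ≤ t := (div_nonneg (norm_nonneg _) (norm_nonneg _)).trans ht.le
  rintro rfl
  rw [div_lt_iff₀ (norm_pos_iff.2 hw), norm_smul, Real.norm_of_nonneg ht0] at ht
  exact lt_irrefl _ ht

theorem norm_div_lt_one_of_norm_lt {K : Type*} [NormedDivisionRing K] {a b : K}
    (h : ‖a‖ < ‖b‖) : ‖a / b‖ < 1 := by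
  rw [norm_div, div_lt_one ((norm_nonneg a).trans_lt h)]
  exact h

namespace Complex

theorem norm_add_re_pos {v : ℂ} (hv : v ∈ slitPlane) : 0 < ‖v‖ + v.re := by
  rcases mem_slitPlane_iff.1 hv with hre | him
  · linarith [norm_nonneg v]
  · linarith [neg_abs_le v.re, abs_re_lt_norm.2 him]

theorem inner_norm_add_self_one (v : ℂ) : ⟪(‖v‖ : ℂ) + v, 1⟫_ℝ = ‖v‖ + v.re := by
  simp [Complex.inner]

theorem inner_norm_add_self_self (v : ℂ) :
    ⟪(‖v‖ : ℂ) + v, v⟫_ℝ = ‖v‖ * (‖v‖ + v.re) := by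
  simp only [Complex.inner, conj_ofReal, map_add, mul_add, mul_conj', add_re, re_mul_ofReal]
  norm_cast
  ring

end Complex

/-- For every `x ∈ ℂ \ [1, ∞)` there exists `α` (with `α ≠ -1`, `α ≠ -x`, `α ≠ 0`) such
that `max(|α/(α+1)|, |(α+x)/(α+1)|) < 1`. -/
theorem stmt_18 (x : ℂ) (hx : ¬(x.im = 0 ∧ 1 ≤ x.re)) :
    ∃ α : ℂ, α ≠ -1 ∧ α ≠ -x ∧ α ≠ 0 ∧
      max (‖α / (α + 1)‖) (‖(α + x) / (α + 1)‖) < 1 := by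
  have hv : 0 < ‖1 - x‖ + (1 - x).re := by
    refine Complex.norm_add_re_pos (Complex.mem_slitPlane_iff.2 ?_)
    simp only [Complex.sub_re, Complex.sub_im, Complex.one_re, Complex.one_im]
    by_contra! h
    exact hx ⟨by linarith [h.2], by linarith [h.1]⟩
  set w : ℂ := ‖1 - x‖ + (1 - x)
  have hw1 : 0 < ⟪w, 1 - 0⟫_ℝ := by rwa [sub_zero, Complex.inner_norm_add_self_one]
  have hwx : 0 < ⟪w, 1 - x⟫_ℝ := by
    rw [Complex.inner_norm_add_self_self]
    exact mul_pos (by linarith [Complex.re_le_norm (1 - x)]) hv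
  have hw : w ≠ 0 := by
    rintro hw
    simp [hw] at hw1
  obtain ⟨t, h0, hx1, hne, hne0⟩ := ((eventually_norm_smul_add_lt hw1).and
    ((eventually_norm_smul_add_lt hwx).and
    ((eventually_smul_ne hw (-x)).and (eventually_smul_ne hw 0)))).exists
  rw [add_zero] at h0
  refine ⟨t • w, fun h => ?_, hne, hne0, max_lt (norm_div_lt_one_of_norm_lt h0)
    (norm_div_lt_one_of_norm_lt hx1)⟩
  norm_num [h] at h0
end

section
/- Let x ∈ ℂ with |x| < 1, set α = −x/2, and define W : ℕ → ℂ by W_n = (∑_{k=0}^{n} (n choose k) α^{n−k} x^{k+1}/(k+1)²) / (1 + α)^{n+1}. Then the sequence W is summable and ∑_{n=0}^{∞} W_n = ∑_{k=0}^{∞} x^{k+1}/(k+1)². -/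
/-!
Since `1/(k+1)² = ∫₀¹ t^k (-log t) dt`, both series are series of integrals of geometric
progressions against the weight `-log t` on `(0, 1]`. By the binomial theorem the transformed term
is `W_n = ∫₀¹ (x/(1+α)) ((α + x t)/(1+α))^n (-log t) dt`, while the `k`-th dilogarithm term is
`∫₀¹ x (x t)^k (-log t) dt`. For `α = -x/2` and `t ∈ [0, 1]` the ratios are bounded by
`(‖x‖/2)/‖1 - x/2‖ < 1` and by `‖x‖ < 1`, so dominated convergence sums both series under the
integral, and both geometric sums equal `x/(1 - x t)`.

Exchanging the two sums in `∑ₙ W_n` directly does not work: that double series is not absolutely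
convergent when, e.g., `x ∈ (1/2, 1)` is real.
-/

open MeasureTheory Set

lemma hasDerivAt_pow_succ_mul_one_sub_log (k : ℕ) {t : ℝ} (ht : t ≠ 0) :
    HasDerivAt (fun s : ℝ => s ^ (k + 1) * (1 - (k + 1) * Real.log s) / (k + 1) ^ 2)
      (t ^ k * -Real.log t) t := by
  refine (((hasDerivAt_pow (k + 1) t).mul (((Real.hasDerivAt_log ht).const_mul
    ((k : ℝ) + 1)).const_sub 1)).div_const (((k : ℝ) + 1) ^ 2)).congr_deriv ?_
  field_simp
  push_cast
  ring

lemma continuous_pow_succ_mul_one_sub_log (k : ℕ) :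
    Continuous fun s : ℝ => s ^ (k + 1) * (1 - (k + 1) * Real.log s) / (k + 1) ^ 2 := by
  have h : Continuous fun s : ℝ =>
      (s ^ (k + 1) - (k + 1) * (s ^ k * (s * Real.log s))) / (k + 1) ^ 2 := by
    fun_prop
  exact h.congr fun s => by ring

lemma pow_mul_neg_log_nonneg (k : ℕ) {t : ℝ} (ht : t ∈ Ioc 0 1) : 0 ≤ t ^ k * -Real.log t :=
  mul_nonneg (pow_nonneg ht.1.le k) (neg_nonneg.mpr (Real.log_nonpos ht.1.le ht.2))

lemma integrableOn_pow_mul_neg_log (k : ℕ) :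
    IntegrableOn (fun t : ℝ => t ^ k * -Real.log t) (Ioc 0 1) :=
  intervalIntegral.integrableOn_deriv_of_nonneg (continuous_pow_succ_mul_one_sub_log k).continuousOn
    (fun _ ht => hasDerivAt_pow_succ_mul_one_sub_log k ht.1.ne')
    (fun _ ht => pow_mul_neg_log_nonneg k (Ioo_subset_Ioc_self ht))

lemma integral_pow_mul_neg_log (k : ℕ) :
    ∫ t in Ioc (0 : ℝ) 1, t ^ k * -Real.log t = 1 / ((k : ℝ) + 1) ^ 2 := by
  rw [← intervalIntegral.integral_of_le zero_le_one,
    intervalIntegral.integral_eq_sub_of_hasDeriv_right_of_le zero_le_one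
      (continuous_pow_succ_mul_one_sub_log k).continuousOn
      (fun _ ht => (hasDerivAt_pow_succ_mul_one_sub_log k ht.1.ne').hasDerivWithinAt)
      ((intervalIntegrable_iff_integrableOn_Ioc_of_le zero_le_one).mpr
        (integrableOn_pow_mul_neg_log k))]
  simp

lemma integral_ofReal_pow_mul_neg_log (k : ℕ) :
    ∫ t in Ioc (0 : ℝ) 1, (t : ℂ) ^ k * -(Real.log t : ℂ) = 1 / ((k : ℂ) + 1) ^ 2 := by
  have h := congrArg ((↑) : ℝ → ℂ) (integral_pow_mul_neg_log k)
  rw [← integral_complex_ofReal] at h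
  push_cast at h
  exact h

lemma integrableOn_ofReal_pow_mul_neg_log (k : ℕ) :
    IntegrableOn (fun t : ℝ => (t : ℂ) ^ k * -(Real.log t : ℂ)) (Ioc 0 1) := by
  have h := (integrableOn_pow_mul_neg_log k).ofReal (𝕜 := ℂ)
  push_cast at h
  exact h

lemma integral_add_mul_pow_mul_neg_log (a b : ℂ) (n : ℕ) :
    ∫ t in Ioc (0 : ℝ) 1, (a + b * t) ^ n * -(Real.log t : ℂ) =
      ∑ k ∈ Finset.range (n + 1), (n.choose k : ℂ) * a ^ (n - k) * b ^ k / ((k : ℂ) + 1) ^ 2 := by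
  have hexpand : ∀ t : ℝ, (a + b * t) ^ n * -(Real.log t : ℂ) =
      ∑ k ∈ Finset.range (n + 1), (n.choose k : ℂ) * a ^ (n - k) * b ^ k *
        ((t : ℂ) ^ k * -(Real.log t : ℂ)) := by
    intro t
    rw [add_comm, add_pow, Finset.sum_mul]
    refine Finset.sum_congr rfl fun k _ => ?_
    ring
  simp_rw [hexpand]
  rw [integral_finsetSum _ fun k _ => (integrableOn_ofReal_pow_mul_neg_log k).const_mul _]
  refine Finset.sum_congr rfl fun k _ => ?_
  rw [integral_const_mul, integral_ofReal_pow_mul_neg_log]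
  ring

theorem hasSum_integral_pow_mul {X 𝕜 : Type*} [MeasurableSpace X] {μ : Measure X} [RCLike 𝕜]
    {z g : X → 𝕜} {r : ℝ} (hr : r < 1) (hz : AEStronglyMeasurable z μ)
    (hzr : ∀ᵐ t ∂μ, ‖z t‖ ≤ r) (hg : Integrable g μ) :
    HasSum (fun n => ∫ t, z t ^ n * g t ∂μ) (∫ t, (1 - z t)⁻¹ * g t ∂μ) := by
  set ρ := max r 0
  have hρ0 : 0 ≤ ρ := le_max_right _ _
  have hρ1 : ρ < 1 := max_lt hr one_pos
  refine hasSum_integral_of_dominated_convergence (fun n t => ρ ^ n * ‖g t‖)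
    (fun n => (hz.pow n).mul hg.aestronglyMeasurable) (fun n => ?_)
    (ae_of_all _ fun t => (summable_geometric_of_lt_one hρ0 hρ1).mul_right _) ?_ ?_
  · filter_upwards [hzr] with t ht
    rw [norm_mul, norm_pow]
    gcongr
    exact ht.trans (le_max_left _ _)
  · simp_rw [tsum_mul_right, tsum_geometric_of_lt_one hρ0 hρ1]
    exact hg.norm.const_mul _
  · filter_upwards [hzr] with t ht
    exact (hasSum_geometric_of_norm_lt_one (ht.trans_lt hr)).mul_right (g t)

lemma binomialTransform_div_pow_eq_integral (x α : ℂ) (n : ℕ) :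
    (∑ k ∈ Finset.range (n + 1), (n.choose k : ℂ) * α ^ (n - k) * x ^ (k + 1) / ((k : ℂ) + 1) ^ 2) /
        (1 + α) ^ (n + 1) =
      ∫ t in Ioc (0 : ℝ) 1, ((α + x * t) / (1 + α)) ^ n * (x / (1 + α) * -(Real.log t : ℂ)) := by
  have hintegrand : ∀ t : ℝ, ((α + x * t) / (1 + α)) ^ n * (x / (1 + α) * -(Real.log t : ℂ)) =
      x / (1 + α) ^ (n + 1) * ((α + x * t) ^ n * -(Real.log t : ℂ)) := by
    intro t
    generalize 1 + α = c
    rw [div_pow, pow_succ]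
    ring
  simp_rw [hintegrand]
  rw [integral_const_mul, integral_add_mul_pow_mul_neg_log, Finset.mul_sum, Finset.sum_div]
  refine Finset.sum_congr rfl fun k _ => ?_
  ring

lemma pow_succ_div_sq_eq_integral (x : ℂ) (k : ℕ) :
    x ^ (k + 1) / ((k : ℂ) + 1) ^ 2 =
      ∫ t in Ioc (0 : ℝ) 1, (x * t) ^ k * (x * -(Real.log t : ℂ)) := by
  have hintegrand : ∀ t : ℝ, (x * t) ^ k * (x * -(Real.log t : ℂ)) =
      x ^ (k + 1) * ((t : ℂ) ^ k * -(Real.log t : ℂ)) := fun t => by ring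
  simp_rw [hintegrand]
  rw [integral_const_mul, integral_ofReal_pow_mul_neg_log]
  ring

lemma norm_neg_div_two_add_mul_le (x : ℂ) {t : ℝ} (ht : t ∈ Icc 0 1) :
    ‖-x / 2 + x * t‖ ≤ ‖x‖ / 2 := by
  have h : -x / 2 + x * t = x * ((t - 1 / 2 : ℝ) : ℂ) := by
    push_cast
    ring
  rw [h, norm_mul, Complex.norm_real, Real.norm_eq_abs, div_eq_mul_one_div ‖x‖]
  gcongr
  rw [abs_le]
  constructor <;> linarith [ht.1, ht.2]

lemma norm_mul_ofReal_le (x : ℂ) {t : ℝ} (ht : t ∈ Icc 0 1) : ‖x * t‖ ≤ ‖x‖ := by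
  rw [norm_mul, Complex.norm_real, Real.norm_eq_abs, abs_of_nonneg ht.1]
  exact mul_le_of_le_one_right (norm_nonneg x) ht.2

lemma norm_div_two_lt_norm_one_add_neg_div_two {x : ℂ} (hx : ‖x‖ < 1) :
    ‖x‖ / 2 < ‖1 + -x / 2‖ := by
  have h := norm_sub_norm_le (1 : ℂ) (x / 2)
  rw [norm_one, norm_div, Complex.norm_two] at h
  rw [neg_div, ← sub_eq_add_neg]
  linarith

lemma inv_one_sub_div_mul_div {K : Type*} [Field K] {a c : K} (hc : c ≠ 0) (b : K) :
    (1 - a / c)⁻¹ * (b / c) = (c - a)⁻¹ * b := by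
  field_simp

/-- For `|x| < 1` and `α = -x/2`, the transformed sequence
`W_n = (B_{α,1} Q)_n / (1+α)^{n+1}` is summable and its sum equals the Maclaurin
series of the dilogarithm, `∑ x^{k+1}/(k+1)²`. -/
theorem stmt_19 (x : ℂ) (hx : ‖x‖ < 1) (α : ℂ) (hα : α = -x / 2) (W : ℕ → ℂ)
    (hW : W = fun (n : ℕ) =>
      (∑ k ∈ Finset.range (n + 1),
        (n.choose k : ℂ) * α ^ (n - k) * x ^ (k + 1) / ((k : ℂ) + 1) ^ 2) / (1 + α) ^ (n + 1)) :
    Summable W ∧ ∑' n, W n = ∑' k : ℕ, x ^ (k + 1) / ((k : ℂ) + 1) ^ 2 := by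
  subst hα hW
  have hc : ‖x‖ / 2 < ‖1 + -x / 2‖ := norm_div_two_lt_norm_one_add_neg_div_two hx
  have hc0 : 1 + -x / 2 ≠ 0 := norm_pos_iff.mp ((by positivity : 0 ≤ ‖x‖ / 2).trans_lt hc)
  have hlog : IntegrableOn (fun t : ℝ => -(Real.log t : ℂ)) (Ioc 0 1) := by
    simpa using integrableOn_ofReal_pow_mul_neg_log 0
  have hEuler := hasSum_integral_pow_mul ((div_lt_one (norm_pos_iff.mpr hc0)).mpr hc)
    (by fun_prop : Continuous fun t : ℝ => (-x / 2 + x * t) / (1 + -x / 2)).aestronglyMeasurable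
    ((ae_restrict_mem measurableSet_Ioc).mono fun t ht => by
      rw [norm_div]
      gcongr
      exact norm_neg_div_two_add_mul_le x (Ioc_subset_Icc_self ht))
    (hlog.const_mul (x / (1 + -x / 2)))
  have hDilog := hasSum_integral_pow_mul hx
    (by fun_prop : Continuous fun t : ℝ => x * t).aestronglyMeasurable
    ((ae_restrict_mem measurableSet_Ioc).mono fun t ht =>
      norm_mul_ofReal_le x (Ioc_subset_Icc_self ht))
    (hlog.const_mul x)
  have hsame : ∀ t : ℂ, (1 - (-x / 2 + x * t) / (1 + -x / 2))⁻¹ * (x / (1 + -x / 2)) =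
      (1 - x * t)⁻¹ * x := fun t => by
    rw [inv_one_sub_div_mul_div hc0]
    ring
  simp_rw [← binomialTransform_div_pow_eq_integral, ← mul_assoc, hsame] at hEuler
  simp_rw [← pow_succ_div_sq_eq_integral, ← mul_assoc] at hDilog
  exact ⟨hEuler.summable, hEuler.tsum_eq.trans hDilog.tsum_eq.symm⟩
end
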